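/- arXiv:1607.03751 — 2 statements merged into one kernel-verified Lean document; each statement's English description precedes it below -/
import Mathlib

section
/- The Jacobian matrix H_W(ρ) of the vector field W = (W⁽¹⁾, W⁽²⁾) is positive definite for every ρ in the open triangle T, and consequently (a - b)·(W(a) - W(b)) ≥ 0 for all a, b ∈ T. -/
/-!
Write `sᵢ = sin (π ρᵢ)`, `σ = sin (π (ρ₁ + ρ₂))`, `c = cos (π (ρ₁ + ρ₂))`. The Jacobian of `W` is
not symmetric, but the sum of its off-diagonal entries collapses to `-s₁ s₂ c / σ²`, so
`v · H_W v = (s₂² v₁² - 2 s₁ s₂ c v₁ v₂ + s₁² v₂²) / (2σ²)`, a binary quadratic form of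
discriminant `-4 s₁² s₂² σ² < 0`. Monotonicity follows because the derivative of
`t ↦ (a - b) · W (b + t (a - b))` is this form at a point of the segment `[b, a] ⊆ T`.
-/

open Real

/-- First component of the vector field `W`. -/
noncomputable def W1 (ρ₁ ρ₂ : ℝ) : ℝ :=
  -(1 / (2 * π)) * Real.cot (π * (ρ₁ + ρ₂)) * (Real.sin (π * ρ₂)) ^ 2
    - ρ₂ / 4 + (1 / (4 * π)) * Real.sin (2 * π * ρ₂)

/-- Second component of the vector field `W`. -/
noncomputable def W2 (ρ₁ ρ₂ : ℝ) : ℝ := W1 ρ₂ ρ₁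

theorem Real.hasDerivAt_cot {x : ℝ} (hx : sin x ≠ 0) : HasDerivAt cot (-1 / sin x ^ 2) x := by
  rw [show cot = cos / sin from funext cot_eq_cos_div_sin]
  refine ((hasDerivAt_cos x).div (hasDerivAt_sin x) hx).congr_deriv ?_
  linear_combination (-1 / sin x ^ 2) * sin_sq_add_cos_sq x

noncomputable def partialW1Fst (x y : ℝ) : ℝ := sin (π * y) ^ 2 / (2 * sin (π * (x + y)) ^ 2)

noncomputable def partialW1Snd (x y : ℝ) : ℝ :=
  partialW1Fst x y - cot (π * (x + y)) * sin (π * y) * cos (π * y) - 1 / 4 + cos (2 * π * y) / 2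

theorem hasDerivAt_W1_comp {u v : ℝ → ℝ} {u' v' t : ℝ} (hu : HasDerivAt u u' t)
    (hv : HasDerivAt v v' t) (h : sin (π * (u t + v t)) ≠ 0) :
    HasDerivAt (fun s => W1 (u s) (v s))
      (u' * partialW1Fst (u t) (v t) + v' * partialW1Snd (u t) (v t)) t := by
  have hcot := (Real.hasDerivAt_cot h).comp t ((hu.add hv).const_mul π)
  have hsin := ((hv.const_mul π).sin).pow 2
  have hsin2 := (hv.const_mul (2 * π)).sin
  refine (((hcot.const_mul (-(1 / (2 * π)))).mul hsin |>.sub (hv.div_const 4)).add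
    (hsin2.const_mul (1 / (4 * π)))).congr_deriv ?_
  simp only [partialW1Fst, partialW1Snd, Function.comp_apply, Pi.add_apply, Pi.pow_apply]
  field_simp
  ring

theorem hasDerivAt_W1_fst {x y : ℝ} (h : sin (π * (x + y)) ≠ 0) :
    HasDerivAt (fun a => W1 a y) (partialW1Fst x y) x := by
  simpa using hasDerivAt_W1_comp (hasDerivAt_id x) (hasDerivAt_const x y) h

theorem hasDerivAt_W1_snd {x y : ℝ} (h : sin (π * (x + y)) ≠ 0) :
    HasDerivAt (fun b => W1 x b) (partialW1Snd x y) y := by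
  simpa using hasDerivAt_W1_comp (hasDerivAt_const y x) (hasDerivAt_id y) h

theorem partialW1Snd_add_partialW1Snd_swap {x y : ℝ} (h : sin (π * (x + y)) ≠ 0) :
    partialW1Snd x y + partialW1Snd y x =
      -(sin (π * x) * sin (π * y) * cos (π * (x + y))) / sin (π * (x + y)) ^ 2 := by
  simp only [partialW1Snd, partialW1Fst, add_comm y x, cot_eq_cos_div_sin, mul_assoc 2 π,
    cos_two_mul, cos_sq']
  rw [mul_add] at h ⊢
  set X := π * x
  set Y := π * y
  have hX := sin_sq_add_cos_sq X
  have hY := sin_sq_add_cos_sq Y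
  have hA : sin X * cos X + sin Y * cos Y = sin (X + Y) * cos (X - Y) := by
    rw [sin_add, cos_sub]
    linear_combination (-(sin X * cos X)) * hY - sin Y * cos Y * hX
  have hB : cos (X + Y) * cos (X - Y) = cos X ^ 2 - sin Y ^ 2 := by
    rw [cos_add, cos_sub]
    linear_combination cos X ^ 2 * hY - sin Y ^ 2 * hX
  have hC : sin X ^ 2 + sin Y ^ 2 - sin (X + Y) ^ 2 = -2 * sin X * sin Y * cos (X + Y) := by
    rw [sin_add, cos_add]
    linear_combination (-sin X ^ 2) * hY - sin Y ^ 2 * hX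
  -- `hA`, `hB` turn the `cot` terms into `-2σ²(cos² X - sin² Y)`; then `hX` and `hC` finish.
  field_simp
  linear_combination 4 * (-2 * sin (X + Y) * cos (X + Y) * hA - 2 * sin (X + Y) ^ 2 * hB
    - 2 * sin (X + Y) ^ 2 * hX + hC)

theorem quadratic_form_pos {R : Type*} [CommRing R] [LinearOrder R] [IsStrictOrderedRing R]
    {a b c v₁ v₂ : R} (ha : 0 < a) (hb : b ^ 2 < a * c) (hv : (v₁, v₂) ≠ 0) :
    0 < a * v₁ ^ 2 + 2 * b * v₁ * v₂ + c * v₂ ^ 2 := by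
  rcases eq_or_ne v₂ 0 with rfl | hv₂
  · have hv₁ : v₁ ≠ 0 := by rintro rfl; exact hv rfl
    have : 0 < a * v₁ ^ 2 := by positivity
    linarith
  · refine pos_of_mul_pos_right ?_ ha.le
    have hv₂' : 0 < (a * c - b ^ 2) * v₂ ^ 2 := mul_pos (sub_pos.2 hb) (by positivity)
    calc 0 < (a * v₁ + b * v₂) ^ 2 + (a * c - b ^ 2) * v₂ ^ 2 :=
          add_pos_of_nonneg_of_pos (sq_nonneg _) hv₂'
      _ = a * (a * v₁ ^ 2 + 2 * b * v₁ * v₂ + c * v₂ ^ 2) := by ring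

noncomputable def jacobianWQuadForm (x y v₁ v₂ : ℝ) : ℝ :=
  v₁ * (v₁ * partialW1Fst x y + v₂ * partialW1Snd x y)
    + v₂ * (v₁ * partialW1Snd y x + v₂ * partialW1Fst y x)

theorem jacobianWQuadForm_eq {x y : ℝ} (h : sin (π * (x + y)) ≠ 0) (v₁ v₂ : ℝ) :
    jacobianWQuadForm x y v₁ v₂ =
      (sin (π * y) ^ 2 * v₁ ^ 2 + 2 * (-(sin (π * x) * sin (π * y) * cos (π * (x + y)))) * v₁ * v₂
        + sin (π * x) ^ 2 * v₂ ^ 2) / (2 * sin (π * (x + y)) ^ 2) := by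
  calc jacobianWQuadForm x y v₁ v₂
      = partialW1Fst x y * v₁ ^ 2 + (partialW1Snd x y + partialW1Snd y x) * v₁ * v₂
          + partialW1Fst y x * v₂ ^ 2 := by unfold jacobianWQuadForm; ring
    _ = _ := by
      rw [partialW1Snd_add_partialW1Snd_swap h, partialW1Fst, partialW1Fst, add_comm y x]
      field_simp

theorem jacobianWQuadForm_pos {x y v₁ v₂ : ℝ} (hx : sin (π * x) ≠ 0) (hy : sin (π * y) ≠ 0)
    (hxy : sin (π * (x + y)) ≠ 0) (hv : (v₁, v₂) ≠ 0) : 0 < jacobianWQuadForm x y v₁ v₂ := by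
  rw [jacobianWQuadForm_eq hxy]
  refine div_pos (quadratic_form_pos (by positivity) ?_ hv) (by positivity)
  have hcos : cos (π * (x + y)) ^ 2 < 1 := by
    have := sin_sq_add_cos_sq (π * (x + y))
    have : 0 < sin (π * (x + y)) ^ 2 := by positivity
    linarith
  have : 0 < sin (π * x) ^ 2 * sin (π * y) ^ 2 := by positivity
  nlinarith

theorem jacobianWQuadForm_nonneg {x y : ℝ} (hx : sin (π * x) ≠ 0) (hy : sin (π * y) ≠ 0)
    (hxy : sin (π * (x + y)) ≠ 0) (v₁ v₂ : ℝ) : 0 ≤ jacobianWQuadForm x y v₁ v₂ := by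
  rcases eq_or_ne (v₁, v₂) 0 with hv | hv
  · obtain ⟨rfl, rfl⟩ := Prod.ext_iff.1 hv
    simp [jacobianWQuadForm]
  · exact (jacobianWQuadForm_pos hx hy hxy hv).le

theorem sin_pi_mul_ne_zero_of_mem_triangle {x y : ℝ} (hx : 0 < x) (hy : 0 < y) (hxy : x + y < 1) :
    sin (π * x) ≠ 0 ∧ sin (π * y) ≠ 0 ∧ sin (π * (x + y)) ≠ 0 := by
  have hsin {z : ℝ} (h₀ : 0 < z) (h₁ : z < 1) : sin (π * z) ≠ 0 :=
    (sin_pos_of_pos_of_lt_pi (by positivity) (by nlinarith [pi_pos])).ne'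
  exact ⟨hsin hx (by linarith), hsin hy (by linarith), hsin (by linarith) hxy⟩

theorem hasDerivAt_inner_W_line {b₁ b₂ d₁ d₂ t : ℝ}
    (h : sin (π * ((b₁ + t * d₁) + (b₂ + t * d₂))) ≠ 0) :
    HasDerivAt (fun s => d₁ * W1 (b₁ + s * d₁) (b₂ + s * d₂) + d₂ * W2 (b₁ + s * d₁) (b₂ + s * d₂))
      (jacobianWQuadForm (b₁ + t * d₁) (b₂ + t * d₂) d₁ d₂) t := by
  have hp₁ := (hasDerivAt_mul_const (x := t) d₁).const_add b₁
  have hp₂ := (hasDerivAt_mul_const (x := t) d₂).const_add b₂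
  have h' : sin (π * ((b₂ + t * d₂) + (b₁ + t * d₁))) ≠ 0 := by rwa [add_comm (b₂ + _)]
  refine (((hasDerivAt_W1_comp hp₁ hp₂ h).const_mul d₁).add
    ((hasDerivAt_W1_comp hp₂ hp₁ h').const_mul d₂)).congr_deriv ?_
  unfold jacobianWQuadForm
  ring

theorem segment_mem_triangle {a₁ a₂ b₁ b₂ t : ℝ} (ha₁ : 0 < a₁) (ha₂ : 0 < a₂) (ha : a₁ + a₂ < 1)
    (hb₁ : 0 < b₁) (hb₂ : 0 < b₂) (hb : b₁ + b₂ < 1) (ht : t ∈ Set.Icc (0 : ℝ) 1) :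
    0 < b₁ + t * (a₁ - b₁) ∧ 0 < b₂ + t * (a₂ - b₂) ∧
      b₁ + t * (a₁ - b₁) + (b₂ + t * (a₂ - b₂)) < 1 := by
  have h₁ := (convex_Ioi (0 : ℝ)).add_smul_sub_mem hb₁ ha₁ ht
  have h₂ := (convex_Ioi (0 : ℝ)).add_smul_sub_mem hb₂ ha₂ ht
  have h₃ := (convex_Ioi (0 : ℝ)).add_smul_sub_mem (sub_pos.2 hb) (sub_pos.2 ha) ht
  simp only [Set.mem_Ioi, smul_eq_mul] at h₁ h₂ h₃
  exact ⟨h₁, h₂, by linarith⟩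

theorem inner_sub_W_sub_nonneg {a₁ a₂ b₁ b₂ : ℝ} (ha₁ : 0 < a₁) (ha₂ : 0 < a₂) (ha : a₁ + a₂ < 1)
    (hb₁ : 0 < b₁) (hb₂ : 0 < b₂) (hb : b₁ + b₂ < 1) :
    0 ≤ (a₁ - b₁) * (W1 a₁ a₂ - W1 b₁ b₂) + (a₂ - b₂) * (W2 a₁ a₂ - W2 b₁ b₂) := by
  set φ : ℝ → ℝ := fun s => (a₁ - b₁) * W1 (b₁ + s * (a₁ - b₁)) (b₂ + s * (a₂ - b₂))
    + (a₂ - b₂) * W2 (b₁ + s * (a₁ - b₁)) (b₂ + s * (a₂ - b₂))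
  have hφ' : ∀ t ∈ Set.Icc (0 : ℝ) 1, HasDerivAt φ
      (jacobianWQuadForm (b₁ + t * (a₁ - b₁)) (b₂ + t * (a₂ - b₂)) (a₁ - b₁) (a₂ - b₂)) t ∧
      0 ≤ jacobianWQuadForm (b₁ + t * (a₁ - b₁)) (b₂ + t * (a₂ - b₂)) (a₁ - b₁) (a₂ - b₂) := by
    intro t ht
    obtain ⟨hp₁, hp₂, hp⟩ := segment_mem_triangle ha₁ ha₂ ha hb₁ hb₂ hb ht
    obtain ⟨hs₁, hs₂, hs⟩ := sin_pi_mul_ne_zero_of_mem_triangle hp₁ hp₂ hp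
    exact ⟨hasDerivAt_inner_W_line hs, jacobianWQuadForm_nonneg hs₁ hs₂ hs _ _⟩
  have hmono : MonotoneOn φ (Set.Icc 0 1) :=
    monotoneOn_of_hasDerivWithinAt_nonneg (convex_Icc 0 1)
      (fun t ht => (hφ' t ht).1.continuousAt.continuousWithinAt)
      (fun t ht => (hφ' t (interior_subset ht)).1.hasDerivWithinAt)
      (fun t ht => (hφ' t (interior_subset ht)).2)
  have h01 := hmono (Set.left_mem_Icc.2 zero_le_one) (Set.right_mem_Icc.2 zero_le_one) zero_le_one
  simp only [φ, zero_mul, add_zero, one_mul, add_sub_cancel] at h01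
  linarith

/-- The Jacobian of `W` is positive definite on the open triangle `T`, and consequently
`(a-b)·(W(a)-W(b)) ≥ 0` for `a, b ∈ T`. -/
theorem HW_posDef_and_monotone :
    (∀ ρ₁ ρ₂ : ℝ, 0 < ρ₁ → 0 < ρ₂ → ρ₁ + ρ₂ < 1 →
      ∀ v₁ v₂ : ℝ, (v₁, v₂) ≠ ((0 : ℝ), (0 : ℝ)) →
        0 < v₁ * (v₁ * deriv (fun a => W1 a ρ₂) ρ₁ + v₂ * deriv (fun b => W1 ρ₁ b) ρ₂)
          + v₂ * (v₁ * deriv (fun a => W2 a ρ₂) ρ₁ + v₂ * deriv (fun b => W2 ρ₁ b) ρ₂)) ∧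
    (∀ a₁ a₂ b₁ b₂ : ℝ, 0 < a₁ → 0 < a₂ → a₁ + a₂ < 1 → 0 < b₁ → 0 < b₂ → b₁ + b₂ < 1 →
      0 ≤ (a₁ - b₁) * (W1 a₁ a₂ - W1 b₁ b₂) + (a₂ - b₂) * (W2 a₁ a₂ - W2 b₁ b₂)) := by
  refine ⟨fun ρ₁ ρ₂ h₁ h₂ h₁₂ v₁ v₂ hv => ?_, fun _ _ _ _ => inner_sub_W_sub_nonneg⟩
  obtain ⟨hs₁, hs₂, hs⟩ := sin_pi_mul_ne_zero_of_mem_triangle h₁ h₂ h₁₂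
  have hs' : sin (π * (ρ₂ + ρ₁)) ≠ 0 := by rwa [add_comm]
  simp only [W2]
  rw [(hasDerivAt_W1_fst hs).deriv, (hasDerivAt_W1_snd hs).deriv, (hasDerivAt_W1_fst hs').deriv,
    (hasDerivAt_W1_snd hs').deriv]
  exact jacobianWQuadForm_pos hs₁ hs₂ hs hv
end

section
/- Let F : Ω → ℝ (Ω ⊂ ℝ² convex open) be the composition F(s) = (1+s₂/2)·σ(ρ(s)) where σ is smooth and strictly convex on the triangle T and ρ(s) = ((1-s₁)/(2+s₂),(1+s₁)/(2+s₂)). If σ₁₁σ₂₂ - σ₁₂² = π² on T with σ₁₁ > 0, then F₁₁(s) = ∂²F/∂s₁² > 0 for all s ∈ (-1,1)×(0,∞). -/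
open Real

/-- Partial derivative in the first variable. -/
noncomputable def p1 (f : ℝ → ℝ → ℝ) (x y : ℝ) : ℝ := deriv (fun x' => f x' y) x

/-- Partial derivative in the second variable. -/
noncomputable def p2 (f : ℝ → ℝ → ℝ) (x y : ℝ) : ℝ := deriv (fun y' => f x y') y

/-- The open triangle `T`. -/
def Tri : Set (ℝ × ℝ) := {p | 0 < p.1 ∧ 0 < p.2 ∧ p.1 + p.2 < 1}

lemma isOpen_Tri : IsOpen Tri := by
  have : Tri = ({p : ℝ × ℝ | 0 < p.1} ∩ {p | 0 < p.2}) ∩ {p | p.1 + p.2 < 1} := by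
    ext p; simp [Tri]; tauto
  rw [this]
  exact ((isOpen_lt continuous_const continuous_fst).inter
    (isOpen_lt continuous_const continuous_snd)).inter
    (isOpen_lt (continuous_fst.add continuous_snd) continuous_const)

lemma p1_eq_fderiv (f : ℝ → ℝ → ℝ) {x y : ℝ}
    (hf : DifferentiableAt ℝ (fun p : ℝ × ℝ => f p.1 p.2) (x, y)) :
    p1 f x y = fderiv ℝ (fun p : ℝ × ℝ => f p.1 p.2) (x, y) (1, 0) := by
  have h1 : HasDerivAt (fun x' : ℝ => (x', y)) ((1 : ℝ), (0 : ℝ)) x :=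
    (hasDerivAt_id x).prodMk (hasDerivAt_const x y)
  exact (hf.hasFDerivAt.comp_hasDerivAt x h1).deriv

lemma p2_eq_fderiv (f : ℝ → ℝ → ℝ) {x y : ℝ}
    (hf : DifferentiableAt ℝ (fun p : ℝ × ℝ => f p.1 p.2) (x, y)) :
    p2 f x y = fderiv ℝ (fun p : ℝ × ℝ => f p.1 p.2) (x, y) (0, 1) := by
  have h1 : HasDerivAt (fun y' : ℝ => (x, y')) ((0 : ℝ), (1 : ℝ)) y :=
    (hasDerivAt_const y x).prodMk (hasDerivAt_id y)
  exact (hf.hasFDerivAt.comp_hasDerivAt y h1).deriv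

/-- Let `F(s) = (1+s₂/2) σ(ρ(s))` with `ρ(s) = ((1-s₁)/(2+s₂), (1+s₁)/(2+s₂))`, where `σ`
is smooth and strictly convex on `T`, with `σ₁₁ > 0` and Hessian determinant `π²`. Then
`F₁₁(s) > 0` on `(-1,1) × (0,∞)`. -/
theorem F11_pos (σ : ℝ → ℝ → ℝ)
    (hσ : ContDiffOn ℝ (⊤ : ℕ∞) (fun p : ℝ × ℝ => σ p.1 p.2) Tri)
    (hconv : StrictConvexOn ℝ Tri (fun p : ℝ × ℝ => σ p.1 p.2))
    (h11 : ∀ p ∈ Tri, 0 < p1 (p1 σ) p.1 p.2)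
    (hdet : ∀ p ∈ Tri,
      p1 (p1 σ) p.1 p.2 * p2 (p2 σ) p.1 p.2 - (p2 (p1 σ) p.1 p.2) ^ 2 = π ^ 2) :
    ∀ s₁ s₂ : ℝ, -1 < s₁ → s₁ < 1 → 0 < s₂ →
      0 < p1 (p1 (fun a b => (1 + b / 2) * σ ((1 - a) / (2 + b)) ((1 + a) / (2 + b)))) s₁ s₂ := by
  intro s₁ s₂ hm1 h1 hs2
  set G : ℝ × ℝ → ℝ := fun p => σ p.1 p.2 with hGdef
  set Φ : ℝ × ℝ → (ℝ × ℝ →L[ℝ] ℝ) := fderiv ℝ G with hΦdef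
  -- Basic smoothness facts on Tri
  have hCAt : ∀ q ∈ Tri, ContDiffAt ℝ (⊤ : ℕ∞) G q := fun q hq =>
    hσ.contDiffAt (isOpen_Tri.mem_nhds hq)
  have hdiff : ∀ q ∈ Tri, DifferentiableAt ℝ G q := fun q hq =>
    (hCAt q hq).differentiableAt (by simp)
  have hΦC : ∀ q ∈ Tri, ContDiffAt ℝ 1 Φ q := fun q hq =>
    (hCAt q hq).fderiv_right (by norm_cast)
  have hΦdiff : ∀ q ∈ Tri, DifferentiableAt ℝ Φ q := fun q hq =>
    (hΦC q hq).differentiableAt (by simp)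
  -- p1 σ, p2 σ expressed via Φ on Tri
  have hp1σ : ∀ q ∈ Tri, p1 σ q.1 q.2 = Φ q (1, 0) := fun q hq =>
    p1_eq_fderiv σ (hdiff (q.1, q.2) hq)
  have hp2σ : ∀ q ∈ Tri, p2 σ q.1 q.2 = Φ q (0, 1) := fun q hq =>
    p2_eq_fderiv σ (hdiff (q.1, q.2) hq)
  -- derivatives of slices of Φ applied to a fixed vector
  have key : ∀ q ∈ Tri, ∀ v : ℝ × ℝ,
      deriv (fun x' => Φ (x', q.2) v) q.1 = fderiv ℝ Φ q (1, 0) v ∧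
      deriv (fun y' => Φ (q.1, y') v) q.2 = fderiv ℝ Φ q (0, 1) v := by
    intro q hq v
    have hΦq := (hΦdiff q hq).hasFDerivAt
    constructor
    · have hline : HasDerivAt (fun x' : ℝ => ((x' : ℝ), q.2)) ((1 : ℝ), (0 : ℝ)) q.1 :=
        (hasDerivAt_id q.1).prodMk (hasDerivAt_const q.1 q.2)
      have h2 : HasDerivAt (fun x' : ℝ => Φ (x', q.2)) (fderiv ℝ Φ q (1, 0)) q.1 := by
        have h := HasFDerivAt.comp_hasDerivAt q.1 (by simpa using hΦq) hline
        exact h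
      have h3 := h2.clm_apply (hasDerivAt_const q.1 v)
      simpa using h3.deriv
    · have hline : HasDerivAt (fun y' : ℝ => (q.1, (y' : ℝ))) ((0 : ℝ), (1 : ℝ)) q.2 :=
        (hasDerivAt_const q.2 q.1).prodMk (hasDerivAt_id q.2)
      have h2 : HasDerivAt (fun y' : ℝ => Φ (q.1, y')) (fderiv ℝ Φ q (0, 1)) q.2 := by
        have h := HasFDerivAt.comp_hasDerivAt q.2 (by simpa using hΦq) hline
        exact h
      have h3 := h2.clm_apply (hasDerivAt_const q.2 v)
      simpa using h3.deriv
  -- the second partial derivatives of σ as entries of the second fderiv of G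
  have hA : ∀ q ∈ Tri, p1 (p1 σ) q.1 q.2 = fderiv ℝ Φ q (1, 0) (1, 0) := by
    intro q hq
    have hev : ∀ᶠ x' in nhds q.1, ((x' : ℝ), q.2) ∈ Tri := by
      have hc : ContinuousAt (fun x' : ℝ => ((x' : ℝ), q.2)) q.1 :=
        (continuous_id.prodMk continuous_const).continuousAt
      exact hc.preimage_mem_nhds (isOpen_Tri.mem_nhds (by simpa using hq))
    have heq : (fun x' => p1 σ x' q.2) =ᶠ[nhds q.1] (fun x' => Φ (x', q.2) (1, 0)) := by
      filter_upwards [hev] with x' hx' using hp1σ (x', q.2) hx'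
    rw [p1, heq.deriv_eq]
    exact (key q hq (1, 0)).1
  have hB : ∀ q ∈ Tri, p2 (p1 σ) q.1 q.2 = fderiv ℝ Φ q (0, 1) (1, 0) := by
    intro q hq
    have hev : ∀ᶠ y' in nhds q.2, (q.1, (y' : ℝ)) ∈ Tri := by
      have hc : ContinuousAt (fun y' : ℝ => (q.1, (y' : ℝ))) q.2 :=
        (continuous_const.prodMk continuous_id).continuousAt
      exact hc.preimage_mem_nhds (isOpen_Tri.mem_nhds (by simpa using hq))
    have heq : (fun y' => p1 σ q.1 y') =ᶠ[nhds q.2] (fun y' => Φ (q.1, y') (1, 0)) := by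
      filter_upwards [hev] with y' hy' using hp1σ (q.1, y') hy'
    rw [p2, heq.deriv_eq]
    exact (key q hq (1, 0)).2
  have hD : ∀ q ∈ Tri, p2 (p2 σ) q.1 q.2 = fderiv ℝ Φ q (0, 1) (0, 1) := by
    intro q hq
    have hev : ∀ᶠ y' in nhds q.2, (q.1, (y' : ℝ)) ∈ Tri := by
      have hc : ContinuousAt (fun y' : ℝ => (q.1, (y' : ℝ))) q.2 :=
        (continuous_const.prodMk continuous_id).continuousAt
      exact hc.preimage_mem_nhds (isOpen_Tri.mem_nhds (by simpa using hq))
    have heq : (fun y' => p2 σ q.1 y') =ᶠ[nhds q.2] (fun y' => Φ (q.1, y') (0, 1)) := by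
      filter_upwards [hev] with y' hy' using hp2σ (q.1, y') hy'
    rw [p2, heq.deriv_eq]
    exact (key q hq (0, 1)).2
  -- symmetry of the second derivative
  have hsymm : ∀ q ∈ Tri, ∀ v w : ℝ × ℝ, fderiv ℝ Φ q v w = fderiv ℝ Φ q w v := by
    intro q hq v w
    have hev : ∀ᶠ y in nhds q, HasFDerivAt G (Φ y) y := by
      filter_upwards [isOpen_Tri.mem_nhds hq] with y hy using (hdiff y hy).hasFDerivAt
    exact second_derivative_symmetric_of_eventually hev (hΦdiff q hq).hasFDerivAt v w
  -- the line
  have hk : (0 : ℝ) < 2 + s₂ := by linarith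
  set v : ℝ × ℝ := ((-1) / (2 + s₂), 1 / (2 + s₂)) with hvdef
  set ρ : ℝ → ℝ × ℝ := fun a => ((1 - a) / (2 + s₂), (1 + a) / (2 + s₂)) with hρdef
  have hρmem : ∀ a ∈ Set.Ioo (-1 : ℝ) 1, ρ a ∈ Tri := by
    rintro a ⟨ha1, ha2⟩
    refine ⟨div_pos (by linarith) hk, div_pos (by linarith) hk, ?_⟩
    show (1 - a) / (2 + s₂) + (1 + a) / (2 + s₂) < 1
    rw [← add_div, div_lt_one hk]
    linarith
  have hρd : ∀ a : ℝ, HasDerivAt ρ v a := by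
    intro a
    have hd1 : HasDerivAt (fun a' : ℝ => (1 - a') / (2 + s₂)) ((-1) / (2 + s₂)) a := by
      simpa using ((hasDerivAt_const a (1 : ℝ)).sub (hasDerivAt_id a)).div_const (2 + s₂)
    have hd2 : HasDerivAt (fun a' : ℝ => (1 + a') / (2 + s₂)) (1 / (2 + s₂)) a := by
      simpa using ((hasDerivAt_const a (1 : ℝ)).add (hasDerivAt_id a)).div_const (2 + s₂)
    exact hd1.prodMk hd2
  -- first derivative in s₁ direction
  have hstep1 : ∀ a ∈ Set.Ioo (-1 : ℝ) 1,
      HasDerivAt (fun a' => (1 + s₂ / 2) * σ ((1 - a') / (2 + s₂)) ((1 + a') / (2 + s₂)))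
        ((1 + s₂ / 2) * (Φ (ρ a) v)) a := by
    intro a ha
    have hc := HasFDerivAt.comp_hasDerivAt a (hdiff (ρ a) (hρmem a ha)).hasFDerivAt (hρd a)
    have hc' : HasDerivAt (fun a' => σ ((1 - a') / (2 + s₂)) ((1 + a') / (2 + s₂)))
        (Φ (ρ a) v) a := hc
    exact hc'.const_mul (1 + s₂ / 2)
  have hq : ρ s₁ ∈ Tri := hρmem s₁ ⟨hm1, h1⟩
  -- second derivative
  have hstep2 : HasDerivAt (fun a => (1 + s₂ / 2) * (Φ (ρ a) v))
      ((1 + s₂ / 2) * (fderiv ℝ Φ (ρ s₁) v v)) s₁ := by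
    have hcomp : HasDerivAt (fun a => Φ (ρ a)) (fderiv ℝ Φ (ρ s₁) v) s₁ :=
      HasFDerivAt.comp_hasDerivAt s₁ (hΦdiff (ρ s₁) hq).hasFDerivAt (hρd s₁)
    have happ := hcomp.clm_apply (hasDerivAt_const s₁ v)
    have h' : HasDerivAt (fun a => Φ (ρ a) v) (fderiv ℝ Φ (ρ s₁) v v) s₁ := by
      simpa using happ
    exact h'.const_mul (1 + s₂ / 2)
  -- compute the target second partial derivative
  have hIooN : Set.Ioo (-1 : ℝ) 1 ∈ nhds s₁ := isOpen_Ioo.mem_nhds ⟨hm1, h1⟩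
  have heqF : (fun a => p1 (fun a b => (1 + b / 2) * σ ((1 - a) / (2 + b)) ((1 + a) / (2 + b))) a s₂)
      =ᶠ[nhds s₁] (fun a => (1 + s₂ / 2) * (Φ (ρ a) v)) := by
    filter_upwards [hIooN] with a ha
    exact (hstep1 a ha).deriv
  have hderiv : p1 (p1 (fun a b => (1 + b / 2) * σ ((1 - a) / (2 + b)) ((1 + a) / (2 + b)))) s₁ s₂
      = (1 + s₂ / 2) * (fderiv ℝ Φ (ρ s₁) v v) := by
    rw [p1, heqF.deriv_eq]
    exact hstep2.deriv
  -- expand the quadratic form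
  have hvexp : v = ((-1) / (2 + s₂)) • ((1 : ℝ), (0 : ℝ)) + (1 / (2 + s₂)) • ((0 : ℝ), (1 : ℝ)) := by
    rw [hvdef]
    simp [Prod.ext_iff]
  have hexp : fderiv ℝ Φ (ρ s₁) v v = (1 / (2 + s₂)) ^ 2 *
      (fderiv ℝ Φ (ρ s₁) (1, 0) (1, 0) - 2 * fderiv ℝ Φ (ρ s₁) (0, 1) (1, 0)
        + fderiv ℝ Φ (ρ s₁) (0, 1) (0, 1)) := by
    rw [hvexp]
    simp only [map_add, map_smul, ContinuousLinearMap.add_apply, ContinuousLinearMap.coe_smul',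
      Pi.smul_apply, smul_eq_mul]
    rw [hsymm (ρ s₁) hq (1, 0) (0, 1)]
    ring
  -- positivity
  have hApos := h11 (ρ s₁) hq
  have hdetq := hdet (ρ s₁) hq
  rw [hA (ρ s₁) hq] at hApos
  rw [hA (ρ s₁) hq, hB (ρ s₁) hq, hD (ρ s₁) hq] at hdetq
  have hquad : 0 < fderiv ℝ Φ (ρ s₁) (1, 0) (1, 0) - 2 * fderiv ℝ Φ (ρ s₁) (0, 1) (1, 0)
      + fderiv ℝ Φ (ρ s₁) (0, 1) (0, 1) := by
    nlinarith [sq_nonneg (fderiv ℝ Φ (ρ s₁) (1, 0) (1, 0) - fderiv ℝ Φ (ρ s₁) (0, 1) (1, 0)),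
      pi_pos, sq_nonneg π]
  rw [hderiv, hexp]
  have h2 : (0 : ℝ) < (1 / (2 + s₂)) ^ 2 := by positivity
  have h3 : (0 : ℝ) < 1 + s₂ / 2 := by linarith
  exact mul_pos h3 (mul_pos h2 hquad)
end
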